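/- Let C = η₀A₀ ⊕ η₁A₁ ⊕ η₂A₂ be a skew (σ, δ)-constacyclic code of length n over R = F_{p^m}[v]/⟨v^3 - v⟩. Then C^⊥ ⊆ C if and only if A_i^⊥ ⊆ A_i for all i = 0, 1, 2. -/

import Mathlib

open Polynomial

set_option synthInstance.maxHeartbeats 1000000
set_option maxHeartbeats 1000000

noncomputable section

/-- The ring `R = F[v]/⟨v^3 - v⟩`. -/
abbrev Rq (F : Type) [Field F] : Type :=
  Polynomial F ⧸ Ideal.span {(X : Polynomial F) ^ 3 - X}

/-- The image of `v` in `R`. -/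
def vR (F : Type) [Field F] : Rq F := Ideal.Quotient.mk _ X

/-- The orthogonal idempotents `η₀ = 1 - v²`, `η₁ = ζ(v² + v)`, `η₂ = ζ(v² - v)`
with `ζ = 2⁻¹`. -/
def eta (F : Type) [Field F] : Fin 3 → Rq F :=
  ![1 - vR F ^ 2,
    algebraMap F (Rq F) (2 : F)⁻¹ * (vR F ^ 2 + vR F),
    algebraMap F (Rq F) (2 : F)⁻¹ * (vR F ^ 2 - vR F)]

/-- A code `C` of length `n` over `S` is skew `(σ, δ)`-constacyclic if it is closed
under the shift `(c₀, …, c_{n-1}) ↦ (σ(δ c_{n-1}), σ(c₀), …, σ(c_{n-2}))`. -/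
def IsSkewConstacyclic {S : Type} [CommRing S] {n : ℕ} [NeZero n]
    (σ : RingAut S) (δ : S) (C : Set (Fin n → S)) : Prop :=
  ∀ c ∈ C, (fun i : Fin n => σ ((if i = 0 then δ else 1) * c (i - 1))) ∈ C

/-- The Euclidean dual of a code, with respect to the standard bilinear form. -/
def dualSet {ι S : Type} [Fintype ι] [CommRing S] (C : Set (ι → S)) : Set (ι → S) :=
  {a | ∀ b ∈ C, ∑ t, a t * b t = 0}

/-- The polynomial (coefficient vector) associated to a codeword. -/
noncomputable def toPoly {S : Type} [Semiring S] {n : ℕ} (c : Fin n → S) : ℕ →₀ S :=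
  ∑ i : Fin n, Finsupp.single (i : ℕ) (c i)

/-- A polynomial is monic: it has a coefficient equal to `1` beyond which all
coefficients vanish. -/
def IsMonicPoly {S : Type} [Semiring S] (g : ℕ →₀ S) : Prop :=
  ∃ d, g d = 1 ∧ ∀ j, d < j → g j = 0

/-- The skew reciprocal polynomial `h*(x) = Σ_{j=0}^k Θ^j(h_{k-j}) x^j` of a
polynomial `h` of degree (at most) `k`. -/
noncomputable def skewRecip {S : Type} [Ring S] (Θ : RingAut S) (k : ℕ) (h : ℕ →₀ S) :
    ℕ →₀ S :=
  ∑ j ∈ Finset.range (k + 1), Finsupp.single j ((Θ ^ j) (h (k - j)))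


/-!
Evaluation at the three roots `0, 1, -1` of `v³ - v` gives `F`-algebra maps `φᵢ : R → F` with
`φᵢ(ηⱼ) = δᵢⱼ` and `r = Σⱼ ηⱼ φⱼ(r)` (this needs `2` to be invertible, which holds since `|F|`
is odd). Applied coordinatewise, `φₖ` maps `C` onto `Aₖ`, and since an element of `R` vanishes
as soon as all its images `φₖ` do, `a ∈ C⊥` exactly when `φₖ(a) ∈ Aₖ⊥` for every `k`.
Testing `C⊥ ⊆ C` on the vectors `ηₖ b` then gives `Aₖ⊥ ⊆ Aₖ`, and conversely.
-/

lemma two_ne_zero_of_odd_card {F : Type*} [Field F] [Fintype F] (h : Odd (Fintype.card F)) :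
    (2 : F) ≠ 0 :=
  Ring.two_ne_zero fun h2 => by
    have := FiniteField.even_card_iff_char_two.1 h2
    rw [Nat.odd_iff] at h
    omega

section OrthogonalDecomposition

variable {F S κ ι : Type} [Field F] [CommRing S] [Algebra F S] [Fintype κ]
  {φ : κ → S →ₐ[F] F} {η : κ → S}

def idempotentCode (η : κ → S) (A : κ → Submodule F (ι → F)) : Set (ι → S) :=
  {c | ∃ y : κ → ι → F, (∀ i, y i ∈ A i) ∧ c = fun t => ∑ j, η j * algebraMap F S (y j t)}

lemma eq_zero_of_forall_apply_eq_zero (hdec : ∀ r, ∑ j, η j * algebraMap F S (φ j r) = r)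
    {r : S} (h : ∀ k, φ k r = 0) : r = 0 := by
  rw [← hdec r]
  simp [h]

variable [DecidableEq κ] {A : κ → Submodule F (ι → F)}

lemma apply_sum_mul_algebraMap (hφη : ∀ i j, φ i (η j) = if i = j then 1 else 0)
    (z : κ → F) (k : κ) : φ k (∑ j, η j * algebraMap F S (z j)) = z k := by
  simp [hφη]

lemma mem_idempotentCode_iff (hφη : ∀ i j, φ i (η j) = if i = j then 1 else 0)
    (hdec : ∀ r, ∑ j, η j * algebraMap F S (φ j r) = r) (c : ι → S) :
    c ∈ idempotentCode η A ↔ ∀ k, (fun t => φ k (c t)) ∈ A k := by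
  constructor
  · rintro ⟨y, hy, rfl⟩ k
    simpa only [apply_sum_mul_algebraMap hφη] using hy k
  · exact fun h => ⟨fun k t => φ k (c t), h, funext fun t => (hdec (c t)).symm⟩

variable [Fintype ι]

lemma mem_dualSet_idempotentCode_iff (hφη : ∀ i j, φ i (η j) = if i = j then 1 else 0)
    (hdec : ∀ r, ∑ j, η j * algebraMap F S (φ j r) = r) (a : ι → S) :
    a ∈ dualSet (idempotentCode η A) ↔
      ∀ k, (fun t => φ k (a t)) ∈ dualSet (A k : Set (ι → F)) := by
  have key : ∀ (y : κ → ι → F) k,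
      φ k (∑ t, a t * ∑ j, η j * algebraMap F S (y j t)) = ∑ t, φ k (a t) * y k t := by
    intro y k
    simp only [map_sum, map_mul, apply_sum_mul_algebraMap hφη]
  constructor
  · intro ha k b hb
    have hsingle : (fun t => ∑ j, η j * algebraMap F S ((Pi.single k b : κ → ι → F) j t)) ∈
        idempotentCode η A := by
      refine ⟨Pi.single k b, fun j => ?_, rfl⟩
      rcases eq_or_ne j k with rfl | hjk
      · simpa using hb
      · simp [hjk]
    simpa [key] using congrArg (φ k) (ha _ hsingle)
  · rintro ha _ ⟨y, hy, rfl⟩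
    exact eq_zero_of_forall_apply_eq_zero hdec fun k => (key y k).trans (ha k _ (hy k))

theorem dualSet_idempotentCode_subset_iff (hφη : ∀ i j, φ i (η j) = if i = j then 1 else 0)
    (hdec : ∀ r, ∑ j, η j * algebraMap F S (φ j r) = r) :
    dualSet (idempotentCode η A) ⊆ idempotentCode η A ↔
      ∀ k, dualSet (A k : Set (ι → F)) ⊆ A k := by
  constructor
  · intro h k b hb
    set a : ι → S := fun t => ∑ j, η j * algebraMap F S ((Pi.single k b : κ → ι → F) j t)
    have hφa : ∀ j t, φ j (a t) = (Pi.single k b : κ → ι → F) j t := fun j t =>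
      apply_sum_mul_algebraMap hφη _ j
    have ha : a ∈ dualSet (idempotentCode η A) := by
      refine (mem_dualSet_idempotentCode_iff hφη hdec a).2 fun j => ?_
      rcases eq_or_ne j k with rfl | hjk
      · simpa [hφa] using hb
      · simp [hφa, hjk, dualSet]
    simpa [hφa] using (mem_idempotentCode_iff hφη hdec a).1 (h ha) k
  · intro h a ha
    rw [mem_dualSet_idempotentCode_iff hφη hdec] at ha
    exact (mem_idempotentCode_iff hφη hdec a).2 fun k => h k (ha k)

end OrthogonalDecomposition

section EvaluationAtRoots

variable (F : Type) [Field F]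

lemma vR_pow_three : vR F ^ 3 = vR F := by
  rw [← sub_eq_zero, vR, ← map_pow, ← map_sub, Ideal.Quotient.eq_zero_iff_mem]
  exact Ideal.subset_span rfl

def evalPoint : Fin 3 → F := ![0, 1, -1]

lemma evalPoint_pow_three (i : Fin 3) : evalPoint F i ^ 3 = evalPoint F i := by
  fin_cases i <;> simp [evalPoint]
  norm_num

def evalRq (i : Fin 3) : Rq F →ₐ[F] F :=
  Ideal.Quotient.liftₐ _ (aeval (evalPoint F i)) fun f hf => by
    obtain ⟨g, rfl⟩ := Ideal.mem_span_singleton'.1 hf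
    simp [evalPoint_pow_three]

variable {F}

lemma evalRq_mk (i : Fin 3) (f : F[X]) :
    evalRq F i (Ideal.Quotient.mk _ f) = f.eval (evalPoint F i) := by
  simp [evalRq, Ideal.Quotient.liftₐ_apply]

lemma evalRq_vR (i : Fin 3) : evalRq F i (vR F) = evalPoint F i := by
  simp [vR, evalRq_mk]

lemma evalRq_eta (h2 : (2 : F) ≠ 0) (i j : Fin 3) :
    evalRq F i (eta F j) = if i = j then 1 else 0 := by
  fin_cases i <;> fin_cases j <;> simp [_root_.eta, evalRq_vR, evalPoint] <;> field_simp <;> ring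

lemma sum_eta (h2 : (2 : F) ≠ 0) : ∑ j, eta F j = 1 := by
  have h : algebraMap F (Rq F) (2 : F)⁻¹ * 2 = 1 := by
    rw [← map_ofNat (algebraMap F (Rq F)), ← map_mul, inv_mul_cancel₀ h2, map_one]
  simp only [Fin.sum_univ_three, _root_.eta, Matrix.cons_val]
  linear_combination vR F ^ 2 * h

lemma vR_mul_eta (j : Fin 3) :
    vR F * eta F j = algebraMap F (Rq F) (evalPoint F j) * eta F j := by
  have h := vR_pow_three F
  fin_cases j <;> simp [_root_.eta, evalPoint]
  · linear_combination -h
  all_goals linear_combination algebraMap F (Rq F) 2⁻¹ * h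

lemma mul_eta (r : Rq F) (j : Fin 3) :
    r * eta F j = algebraMap F (Rq F) (evalRq F j r) * eta F j := by
  obtain ⟨f, rfl⟩ := Ideal.Quotient.mk_surjective r
  rw [evalRq_mk]
  induction f using Polynomial.induction_on with
  | C a => rw [eval_C]; rfl
  | add f g hf hg => simp only [map_add, eval_add, add_mul, hf, hg]
  | monomial k a hk =>
    have hX : Ideal.Quotient.mk _ (C a * X ^ (k + 1)) =
        Ideal.Quotient.mk _ (C a * X ^ k) * vR F := by
      rw [vR, ← map_mul, mul_assoc, ← pow_succ]
    rw [hX, mul_assoc, vR_mul_eta, mul_left_comm, hk, ← mul_assoc, ← map_mul]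
    congr 2
    simp only [eval_mul, eval_C, eval_pow, eval_X, pow_succ]
    ring

lemma sum_eta_mul_evalRq (h2 : (2 : F) ≠ 0) (r : Rq F) :
    ∑ j, eta F j * algebraMap F (Rq F) (evalRq F j r) = r := by
  simp only [mul_comm (eta F _), ← mul_eta, ← Finset.mul_sum, sum_eta h2, mul_one]

end EvaluationAtRoots

theorem stmt17_general (p m n : ℕ) (hodd : Odd p)
    (F : Type) [Field F] [Fintype F] (hF : Fintype.card F = p ^ m)
    (A : Fin 3 → Submodule F (Fin n → F))
    (C : Submodule (Rq F) (Fin n → Rq F))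
    (hC : ∀ c, c ∈ C ↔ ∃ y : Fin 3 → Fin n → F, (∀ i, y i ∈ A i) ∧
        c = fun t => ∑ j, eta F j * algebraMap F (Rq F) (y j t)) :
    dualSet (C : Set (Fin n → Rq F)) ⊆ (C : Set (Fin n → Rq F)) ↔
      ∀ i, dualSet ((A i : Set (Fin n → F))) ⊆ (A i : Set (Fin n → F)) := by
  have h2 : (2 : F) ≠ 0 := two_ne_zero_of_odd_card (hF ▸ hodd.pow)
  have hCA : (C : Set (Fin n → Rq F)) = idempotentCode (eta F) A := Set.ext hC
  rw [hCA]
  exact dualSet_idempotentCode_subset_iff (evalRq_eta h2) (sum_eta_mul_evalRq h2)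

theorem stmt17 (p m n : ℕ) (hp : p.Prime) (hodd : Odd p) (hm : 0 < m) [NeZero n]
    (F : Type) [Field F] [Fintype F] (hF : Fintype.card F = p ^ m)
    (σ : RingAut (Rq F)) (δ : Rq F) (hδu : IsUnit δ)
    (A : Fin 3 → Submodule F (Fin n → F))
    (C : Submodule (Rq F) (Fin n → Rq F))
    (hC : ∀ c, c ∈ C ↔ ∃ y : Fin 3 → Fin n → F, (∀ i, y i ∈ A i) ∧
        c = fun t => ∑ j, eta F j * algebraMap F (Rq F) (y j t))
    (hconst : IsSkewConstacyclic σ δ (C : Set (Fin n → Rq F))) :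
    dualSet (C : Set (Fin n → Rq F)) ⊆ (C : Set (Fin n → Rq F)) ↔
      ∀ i, dualSet ((A i : Set (Fin n → F))) ⊆ (A i : Set (Fin n → F)) :=
  stmt17_general p m n hodd F hF A C hC
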